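/- arXiv:1302.4209 — 3 statements merged into one kernel-verified Lean document; each statement's English description precedes it below -/
import Mathlib

section
/- Let d ≥ 4 and let G be a finite d-regular simple graph. If G has at least 2d³ + 2d − 2d² vertices, then the b-chromatic number of G equals d + 1, i.e., G admits a proper vertex coloring with d + 1 colors in which every one of the d + 1 color classes contains a vertex adjacent to at least one vertex of each of the other d color classes. -/
/-!
Place centres `x₀, …, x_d` one at a time, pairwise at distance at least 3, giving `x_j` colour `j`
and its `d` neighbours (its petal) the other `d` colours bijectively. The centres are then
dominant, and the remaining vertices are coloured greedily since `d + 1` colours exceed every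
degree.

The petal of a new centre `x` must avoid, at each of its vertices, the colours already adjacent to
it. By Hall's theorem this is possible as soon as fewer than `d` walks of length two lead from `x`
into the earlier petals, or at most `d` if `G` has no 4-cycle: then a colour missing at every
neighbour of `x` would need `d` distinct witnesses in the earlier petals, which hold at most
`d - 1` vertices of each colour. Double counting bounds the total number of such walks from the
vertices far from all centres by `|D| d (d - 1)²`, while at most `|D| (d² + 1)` vertices are near
a centre; hence the bound on `|V|`. If `G` has a 4-cycle, starting on it saves the one vertex
needed for the stricter condition.
-/

/-- A b-coloring of `G` with `k` colors: a proper coloring `c : V → Fin k` such that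
every color class contains a vertex adjacent to at least one vertex of each other color class. -/
def IsBColoring {V : Type*} (G : SimpleGraph V) (k : ℕ) (c : V → Fin k) : Prop :=
  (∀ u v : V, G.Adj u v → c u ≠ c v) ∧
  ∀ i : Fin k, ∃ v : V, c v = i ∧ ∀ j : Fin k, j ≠ i → ∃ w : V, G.Adj v w ∧ c w = j

/-- The b-chromatic number of `G`: the largest `k` such that `G` admits a b-coloring
with `k` colors. -/
noncomputable def bChromaticNumber {V : Type*} (G : SimpleGraph V) : ℕ :=
  sSup {k : ℕ | ∃ c : V → Fin k, IsBColoring G k c}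

open Finset

section

variable {ι α β : Type*} [DecidableEq β]

theorem card_le_card_biUnion_sdiff {S : Finset ι} {C : Finset β} {F : ι → Finset β}
    (hS : #S ≤ #C) (hsum : ∑ u ∈ S, #(F u ∩ C) ≤ #C) (hlt : ∀ u ∈ S, #(F u ∩ C) < #C)
    (hcommon : #S = #C → ∀ c ∈ C, ∃ u ∈ S, c ∉ F u) :
    #S ≤ #(S.biUnion fun u => C \ F u) := by
  obtain rfl | ⟨u₀, hu₀⟩ := S.eq_empty_or_nonempty
  · simp
  set common := C.filter fun c => ∀ u ∈ S, c ∈ F u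
  have hcommon_sub : ∀ u ∈ S, common ⊆ F u ∩ C := fun u hu c hc =>
    mem_inter.2 ⟨(mem_filter.1 hc).2 u hu, (mem_filter.1 hc).1⟩
  have hcover : C \ common ⊆ S.biUnion fun u => C \ F u := by
    intro c hc
    obtain ⟨hcC, hc⟩ := mem_sdiff.1 hc
    obtain ⟨u, hu, hcu⟩ : ∃ u ∈ S, c ∉ F u := by simpa [common, hcC] using hc
    exact mem_biUnion.2 ⟨u, hu, mem_sdiff.2 ⟨hcC, hcu⟩⟩
  have hmul : #S * #common ≤ #C := calc
    #S * #common = ∑ _u ∈ S, #common := by rw [sum_const, smul_eq_mul]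
    _ ≤ ∑ u ∈ S, #(F u ∩ C) := sum_le_sum fun u hu => card_le_card (hcommon_sub u hu)
    _ ≤ #C := hsum
  have hlt₀ : #common < #C := (card_le_card (hcommon_sub u₀ hu₀)).trans_lt (hlt u₀ hu₀)
  have hfull : #S = #C → #common = 0 := fun h => card_eq_zero.2 <| filter_eq_empty_iff.2
    fun c hc hall => by obtain ⟨u, hu, hcu⟩ := hcommon h c hc; exact hcu (hall u hu)
  have hpos : 0 < #S := card_pos.2 ⟨u₀, hu₀⟩
  -- `#S * #common ≤ #C` forces `#S + #common ≤ #C`, except when `#S = 1` or `#S = #C`.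
  have key : #S + #common ≤ #C := by
    rcases Nat.lt_or_ge 1 #S with h1 | h1
    · rcases hS.lt_or_eq with h2 | h2
      · by_contra! h
        nlinarith
      · rw [hfull h2]; omega
    · omega
  have hsplit : #(C \ common) + #common = #C := card_sdiff_add_card_eq_card (filter_subset _ _)
  have := card_le_card hcover
  omega

theorem exists_injOn_mem_sdiff [Nonempty β] {s : Finset α} {C : Finset β} {F : α → Finset β}
    (hcard : #s = #C) (hsum : ∑ u ∈ s, #(F u ∩ C) ≤ #C) (hlt : ∀ u ∈ s, #(F u ∩ C) < #C)
    (hcommon : ∀ c ∈ C, ∃ u ∈ s, c ∉ F u) :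
    ∃ g : α → β, Set.InjOn g s ∧ ∀ u ∈ s, g u ∈ C \ F u := by
  have hall : ∀ S : Finset s, #S ≤ #(S.biUnion fun u => C \ F u) := by
    intro S
    have hS : #S ≤ #C := (card_le_univ S).trans_eq (by rw [Fintype.card_coe, hcard])
    refine card_le_card_biUnion_sdiff hS ?_ (fun u _ => hlt u u.2) fun h c hc => ?_
    · calc ∑ u ∈ S, #(F u ∩ C) ≤ ∑ u : s, #(F u ∩ C) := sum_le_sum_of_subset (subset_univ S)
        _ = ∑ u ∈ s, #(F u ∩ C) := sum_coe_sort s fun u => #(F u ∩ C)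
        _ ≤ #C := hsum
    · have hS : S = univ := eq_univ_of_card S (by rw [h, Fintype.card_coe, hcard])
      obtain ⟨u, hu, hcu⟩ := hcommon c hc
      exact ⟨⟨u, hu⟩, hS ▸ mem_univ _, hcu⟩
  obtain ⟨g, hg_inj, hg⟩ := (all_card_le_biUnion_card_iff_exists_injective _).1 hall
  set g' := Function.extend Subtype.val g fun _ => Classical.arbitrary β
  have hg' : ∀ u : s, g' u = g u := Subtype.val_injective.extend_apply g _
  refine ⟨g', fun u hu v hv huv => ?_, fun u hu => hg' ⟨u, hu⟩ ▸ hg ⟨u, hu⟩⟩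
  rw [hg' ⟨u, hu⟩, hg' ⟨v, hv⟩] at huv
  exact congrArg Subtype.val (hg_inj huv)

theorem Finset.card_biUnion_lt_sum_card {s : Finset ι} {t : ι → Finset β} {a b : ι} (ha : a ∈ s)
    (hb : b ∈ s) (hab : a ≠ b) (h : ¬Disjoint (t a) (t b)) : #(s.biUnion t) < ∑ i ∈ s, #(t i) := by
  classical
  have hsplit : s.biUnion t = t a ∪ (s.erase a).biUnion t := by
    rw [← biUnion_insert, insert_erase ha]
  have hinter : 0 < #(t a ∩ (s.erase a).biUnion t) := by
    obtain ⟨x, hxa, hxb⟩ := not_disjoint_iff.1 h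
    exact card_pos.2 ⟨x, mem_inter.2 ⟨hxa, mem_biUnion.2 ⟨b, mem_erase.2 ⟨hab.symm, hb⟩, hxb⟩⟩⟩
  have := card_union_add_card_inter (t a) ((s.erase a).biUnion t)
  have : #((s.erase a).biUnion t) ≤ ∑ i ∈ s.erase a, #(t i) := card_biUnion_le
  rw [hsplit, ← add_sum_erase s _ ha]
  omega

end

namespace SimpleGraph

section StarExtend

variable {V α : Type*} [DecidableEq V] (G : SimpleGraph V) [DecidableRel G.Adj]

def starExtend (col : V → Option α) (v₀ : V) (a : α) (g : V → α) (v : V) : Option α :=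
  if v = v₀ then some a else if G.Adj v₀ v then some (g v) else col v

variable {G} {col : V → Option α} {v₀ : V} {a : α} {g : V → α}

@[simp]
theorem starExtend_self : G.starExtend col v₀ a g v₀ = some a := by
  simp [starExtend]

theorem starExtend_of_adj {u : V} (h : G.Adj v₀ u) : G.starExtend col v₀ a g u = some (g u) := by
  simp [starExtend, h, h.ne']

end StarExtend

variable {V : Type*} [Fintype V] (G : SimpleGraph V) [DecidableRel G.Adj] {d : ℕ}

section NeighborColors

variable {α : Type*} [DecidableEq α]

def neighborColors (col : V → Option α) (u : V) : Finset α :=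
  (G.neighborFinset u).biUnion fun w => (col w).toFinset

def IsProperPartialColoring (col : V → Option α) : Prop :=
  ∀ u v, G.Adj u v → (col u).isSome → col u ≠ col v

variable {G} {col : V → Option α}

theorem mem_neighborColors {u : V} {c : α} :
    c ∈ G.neighborColors col u ↔ ∃ w, G.Adj u w ∧ col w = some c := by
  simp [neighborColors]

theorem card_neighborColors_le {u : V} {s : Finset V}
    (hs : ∀ w, G.Adj u w → (col w).isSome → w ∈ s) :
    #(G.neighborColors col u) ≤ #s := calc
  #(G.neighborColors col u) ≤ #(s.biUnion fun w => (col w).toFinset) := card_le_card fun c hc => by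
      obtain ⟨w, huw, hwc⟩ := mem_neighborColors.1 hc
      exact mem_biUnion.2 ⟨w, hs w huw (by simp [hwc]), by simp [hwc]⟩
  _ ≤ ∑ w ∈ s, #(col w).toFinset := card_biUnion_le
  _ ≤ ∑ _w ∈ s, 1 := sum_le_sum fun w _ => by cases col w <;> simp
  _ = #s := by simp

theorem exists_notMem_neighborColors_of_degree_lt {k : ℕ} {v : V} (hv : G.degree v < k)
    (col : V → Option (Fin k)) : ∃ a, a ∉ G.neighborColors col v := by
  obtain ⟨a, -, ha⟩ := exists_mem_notMem_of_card_lt_card (t := (univ : Finset (Fin k))) <|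
    (card_neighborColors_le (s := G.neighborFinset v) fun w hw _ => by simpa using hw).trans_lt
      (by simpa using hv)
  exact ⟨a, ha⟩

end NeighborColors

variable [DecidableEq V]

def closedNbhd (v : V) : Finset V := insert v (G.neighborFinset v)

def ball2 (v : V) : Finset V :=
  G.closedNbhd v ∪ (G.neighborFinset v).biUnion fun u => (G.neighborFinset u).erase v

def numTwoWalksInto (P : Finset V) (v : V) : ℕ :=
  ∑ u ∈ G.neighborFinset v, #(G.neighborFinset u ∩ P)

variable {G}

@[simp]
theorem mem_closedNbhd {u v : V} : u ∈ G.closedNbhd v ↔ u = v ∨ G.Adj v u := by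
  simp [closedNbhd]

theorem starExtend_of_notMem {α : Type*} {col : V → Option α} {v₀ v : V} {a : α} {g : V → α}
    (h : v ∉ G.closedNbhd v₀) : G.starExtend col v₀ a g v = col v := by
  simp_all [starExtend]

theorem mem_ball2_of_not_disjoint {v x : V}
    (h : ¬Disjoint (G.closedNbhd x) (G.closedNbhd v)) : x ∈ G.ball2 v := by
  obtain ⟨y, hyx, hyv⟩ := not_disjoint_iff.1 h
  rw [mem_closedNbhd] at hyx hyv
  simp only [ball2, mem_union, mem_closedNbhd, mem_biUnion, mem_neighborFinset, mem_erase]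
  rcases hyx with rfl | hxy
  · exact Or.inl hyv
  rcases hyv with rfl | hvy
  · exact Or.inl (Or.inr hxy.symm)
  by_cases hxv : x = v
  · exact Or.inl (Or.inl hxv)
  · exact Or.inr ⟨y, hvy, hxv, hxy.symm⟩

theorem card_closedNbhd (hreg : G.IsRegularOfDegree d) (v : V) : #(G.closedNbhd v) = d + 1 := by
  rw [closedNbhd, card_insert_of_notMem (by simp), card_neighborFinset_eq_degree, hreg v]

theorem sum_card_neighborFinset_erase (hreg : G.IsRegularOfDegree d) (v : V) :
    ∑ u ∈ G.neighborFinset v, #((G.neighborFinset u).erase v) = d * (d - 1) := by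
  rw [sum_congr rfl fun u hu => ?_, sum_const, card_neighborFinset_eq_degree, hreg v, smul_eq_mul]
  rw [card_erase_of_mem (by simpa [adj_comm] using hu), card_neighborFinset_eq_degree, hreg u]

theorem card_ball2_le_add (hreg : G.IsRegularOfDegree d) (v : V) :
    #(G.ball2 v) ≤ d + 1 + #((G.neighborFinset v).biUnion fun u => (G.neighborFinset u).erase v) :=
  (card_union_le _ _).trans_eq (by rw [card_closedNbhd hreg])

theorem card_ball2_le (hreg : G.IsRegularOfDegree d) (v : V) : #(G.ball2 v) ≤ d ^ 2 + 1 := by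
  have h1 := card_ball2_le_add hreg v
  have h2 := card_biUnion_le.trans_eq (sum_card_neighborFinset_erase hreg v)
  rcases d with _ | d
  · simp_all
  · simp only [Nat.add_sub_cancel] at h2
    nlinarith

/-- Two neighbours of `v` share the neighbour `w ≠ v`, which the bound `d ^ 2 + 1` counts twice. -/
theorem card_ball2_le_of_nontrivial (hreg : G.IsRegularOfDegree d) {v w : V} (hvw : v ≠ w)
    (h : (G.commonNeighbors v w).Nontrivial) : #(G.ball2 v) ≤ d ^ 2 := by
  obtain ⟨u, hu, u', hu', huu'⟩ := h
  rw [mem_commonNeighbors] at hu hu'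
  have hlt := card_biUnion_lt_sum_card (s := G.neighborFinset v)
    (t := fun u => (G.neighborFinset u).erase v)
    (by simpa using hu.1) (by simpa using hu'.1) huu' <| not_disjoint_iff.2
      ⟨w, by simpa [hvw.symm] using hu.2.symm, by simpa [hvw.symm] using hu'.2.symm⟩
  have h1 := card_ball2_le_add hreg v
  rw [sum_card_neighborFinset_erase hreg v] at hlt
  rcases d with _ | d
  · simp at hlt
  · simp only [Nat.add_sub_cancel] at hlt
    nlinarith

theorem sum_sum_neighborFinset (A : Finset V) (h : V → ℕ) :
    ∑ v ∈ A, ∑ u ∈ G.neighborFinset v, h u = ∑ u, #(G.neighborFinset u ∩ A) * h u := by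
  simp_rw [neighborFinset_eq_filter, sum_filter]
  rw [sum_comm]
  refine sum_congr rfl fun u _ => ?_
  rw [← sum_filter, sum_const, smul_eq_mul]
  congr 2
  ext v
  simp [adj_comm, and_comm]

theorem sum_numTwoWalksInto_comm (X P : Finset V) :
    ∑ v ∈ X, G.numTwoWalksInto P v = ∑ w ∈ P, G.numTwoWalksInto X w := by
  simp only [numTwoWalksInto, sum_sum_neighborFinset, mul_comm]

theorem sum_numTwoWalksInto_le (hreg : G.IsRegularOfDegree d) {X P : Finset V}
    (hXP : Disjoint X P) (hP : ∀ w ∈ P, ∃ z, G.Adj w z ∧ Disjoint (G.neighborFinset z) X) :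
    ∑ v ∈ X, G.numTwoWalksInto P v ≤ #P * (d - 1) ^ 2 := by
  rw [sum_numTwoWalksInto_comm, ← smul_eq_mul]
  refine sum_le_card_nsmul _ _ _ fun w hw => ?_
  obtain ⟨z, hwz, hzX⟩ := hP w hw
  have hz : z ∈ G.neighborFinset w := by simpa using hwz
  have hterm : ∀ u ∈ G.neighborFinset w, #(G.neighborFinset u ∩ X) ≤ d - 1 := fun u hu => by
    rw [← hreg u, ← card_neighborFinset_eq_degree,
      ← card_erase_of_mem (show w ∈ G.neighborFinset u by simpa [adj_comm] using hu)]
    refine card_le_card fun x hx => mem_erase.2 ⟨?_, (mem_inter.1 hx).1⟩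
    rintro rfl
    exact Finset.disjoint_left.1 hXP (mem_inter.1 hx).2 hw
  calc G.numTwoWalksInto X w
      = ∑ u ∈ (G.neighborFinset w).erase z, #(G.neighborFinset u ∩ X) := by
        rw [numTwoWalksInto, sum_erase _ (by simpa using disjoint_iff_inter_eq_empty.1 hzX)]
    _ ≤ #((G.neighborFinset w).erase z) * (d - 1) := by
        rw [← smul_eq_mul]
        exact sum_le_card_nsmul _ _ _ fun u hu => hterm u (mem_of_mem_erase hu)
    _ = (d - 1) ^ 2 := by
        rw [card_erase_of_mem hz, card_neighborFinset_eq_degree, hreg w, sq]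

section PartialColoring

variable {α : Type*} [DecidableEq α] {col : V → Option α}

theorem IsProperPartialColoring.update (hcol : G.IsProperPartialColoring col) {v : V} {a : α}
    (ha : a ∉ G.neighborColors col v) :
    G.IsProperPartialColoring (Function.update col v (some a)) := by
  intro x y hxy hx
  have hforb : ∀ w, G.Adj v w → col w ≠ some a := fun w hvw hw =>
    ha (mem_neighborColors.2 ⟨w, hvw, hw⟩)
  rcases eq_or_ne x v with rfl | hxv
  · simpa [hxy.ne'] using (hforb y hxy).symm
  rcases eq_or_ne y v with rfl | hyv
  · simpa [hxv] using hforb x hxy.symm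
  simp only [Function.update_of_ne hxv, Function.update_of_ne hyv] at hx ⊢
  exact hcol x y hxy hx

theorem exists_coloring_extending {k : ℕ} (hdeg : ∀ v, G.degree v < k) (col : V → Option (Fin k))
    (hcol : G.IsProperPartialColoring col) :
    ∃ c : V → Fin k, (∀ u v, G.Adj u v → c u ≠ c v) ∧ ∀ v a, col v = some a → c v = a := by
  suffices ∀ U : Finset V, ∀ col : V → Option (Fin k), G.IsProperPartialColoring col →
      (∀ v, col v = none → v ∈ U) →
      ∃ c : V → Fin k, (∀ u v, G.Adj u v → c u ≠ c v) ∧ ∀ v a, col v = some a → c v = a from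
    this univ col hcol fun v _ => mem_univ v
  intro U
  induction U using Finset.induction_on with
  | empty =>
    intro col hcol hU
    have hall : ∀ v, (col v).isSome := fun v => Option.isSome_iff_ne_none.2 fun h => by
      simpa using hU v h
    refine ⟨fun v => (col v).get (hall v), fun u v huv h => ?_, fun v a h => by simp [h]⟩
    simp only at h
    exact hcol u v huv (hall u) (by rw [← Option.some_get (hall u), h, Option.some_get])
  | insert v U hv ih =>
    intro col hcol hU
    by_cases hcv : col v = none
    · obtain ⟨a, ha⟩ := exists_notMem_neighborColors_of_degree_lt (hdeg v) col
      obtain ⟨c, hc, hext⟩ := ih _ (hcol.update ha) fun w hw => by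
        rcases eq_or_ne w v with rfl | hwv
        · simp at hw
        · simpa [hwv] using mem_insert.1 (hU w (by simpa [hwv] using hw))
      refine ⟨c, hc, fun w b hw => hext w b ?_⟩
      rcases eq_or_ne w v with rfl | hwv
      · simp [hcv] at hw
      · simpa [hwv] using hw
    · exact ih col hcol fun w hw => by
        rcases eq_or_ne w v with rfl | hwv
        · exact absurd hw hcv
        · simpa [hwv] using hU w hw

theorem IsProperPartialColoring.starExtend {v₀ : V} {a : α} {g : V → α}
    (hcol : G.IsProperPartialColoring col)
    (hga : ∀ u, G.Adj v₀ u → g u ≠ a) (hinj : Set.InjOn g (G.neighborSet v₀))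
    (hgF : ∀ u, G.Adj v₀ u → g u ∉ G.neighborColors col u) :
    G.IsProperPartialColoring (G.starExtend col v₀ a g) := by
  have hstar : ∀ u v, G.Adj u v → u ∈ G.closedNbhd v₀ →
      G.starExtend col v₀ a g u ≠ G.starExtend col v₀ a g v := by
    intro u v huv hu
    rcases mem_closedNbhd.1 hu with rfl | hu
    · rw [starExtend_self, starExtend_of_adj huv]
      exact fun h => hga v huv (Option.some_injective _ h).symm
    rw [starExtend_of_adj hu]
    by_cases hv : v ∈ G.closedNbhd v₀
    · rcases mem_closedNbhd.1 hv with rfl | hv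
      · simpa using hga u hu
      · rw [starExtend_of_adj hv]
        exact fun h => huv.ne (hinj hu hv (Option.some_injective _ h))
    · rw [starExtend_of_notMem hv]
      exact fun h => hgF u hu (mem_neighborColors.2 ⟨v, huv, h.symm⟩)
  intro u v huv hu
  by_cases hu₀ : u ∈ G.closedNbhd v₀
  · exact hstar u v huv hu₀
  by_cases hv₀ : v ∈ G.closedNbhd v₀
  · exact (hstar v u huv.symm hv₀).symm
  rw [starExtend_of_notMem hu₀] at hu
  rw [starExtend_of_notMem hu₀, starExtend_of_notMem hv₀]
  exact hcol u v huv hu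

end PartialColoring

section Centers

variable (G) in
def petals (D : Finset (Fin (d + 1))) (f : Fin (d + 1) → V) : Finset V :=
  D.biUnion fun j => G.neighborFinset (f j)

variable (G) in
def farSet (D : Finset (Fin (d + 1))) (f : Fin (d + 1) → V) : Finset V :=
  univ.filter fun v => ∀ j ∈ D, Disjoint (G.closedNbhd v) (G.closedNbhd (f j))

variable {D : Finset (Fin (d + 1))} {f : Fin (d + 1) → V}

theorem mem_farSet {v : V} :
    v ∈ G.farSet D f ↔ ∀ j ∈ D, Disjoint (G.closedNbhd v) (G.closedNbhd (f j)) := by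
  simp [farSet]

theorem card_le_card_farSet_add :
    Fintype.card V ≤ #(G.farSet D f) + ∑ j ∈ D, #(G.ball2 (f j)) := calc
  Fintype.card V = #(univ : Finset V) := card_univ.symm
  _ ≤ #(G.farSet D f ∪ D.biUnion fun j => G.ball2 (f j)) := card_le_card fun v _ => by
      by_cases hv : v ∈ G.farSet D f
      · exact mem_union_left _ hv
      · obtain ⟨j, hj, hvj⟩ : ∃ j ∈ D, ¬Disjoint (G.closedNbhd v) (G.closedNbhd (f j)) := by
          simpa [mem_farSet] using hv
        exact mem_union_right _ (mem_biUnion.2 ⟨j, hj, mem_ball2_of_not_disjoint hvj⟩)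
  _ ≤ #(G.farSet D f) + ∑ j ∈ D, #(G.ball2 (f j)) :=
      (card_union_le _ _).trans (Nat.add_le_add_left card_biUnion_le _)

theorem card_petals (hreg : G.IsRegularOfDegree d)
    (hD : (D : Set (Fin (d + 1))).PairwiseDisjoint (G.closedNbhd ∘ f)) :
    #(G.petals D f) = #D * d := by
  rw [petals, card_biUnion fun j hj k hk hjk => (hD hj hk hjk).mono (subset_insert _ _)
    (subset_insert _ _), sum_congr rfl fun j _ => card_neighborFinset_eq_degree ..]
  simp [hreg _]

theorem sum_numTwoWalksInto_farSet_le (hreg : G.IsRegularOfDegree d)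
    (hD : (D : Set (Fin (d + 1))).PairwiseDisjoint (G.closedNbhd ∘ f)) :
    ∑ v ∈ G.farSet D f, G.numTwoWalksInto (G.petals D f) v ≤ #D * d * (d - 1) ^ 2 := by
  have hfar : ∀ j ∈ D, ∀ x ∈ G.farSet D f, x ∉ G.neighborFinset (f j) := fun j hj x hx hxj =>
    Finset.disjoint_left.1 (mem_farSet.1 hx j hj) (mem_closedNbhd.2 (Or.inl rfl))
      (mem_closedNbhd.2 (Or.inr (by simpa using hxj)))
  rw [← card_petals hreg hD]
  refine sum_numTwoWalksInto_le hreg ?_ fun w hw => ?_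
  · refine Finset.disjoint_left.2 fun x hx hxP => ?_
    obtain ⟨j, hj, hxj⟩ := mem_biUnion.1 hxP
    exact hfar j hj x hx hxj
  · obtain ⟨j, hj, hwj⟩ := mem_biUnion.1 hw
    exact ⟨f j, by simpa [adj_comm] using hwj,
      Finset.disjoint_left.2 fun x hxj hx => hfar j hj x hx hxj⟩

theorem exists_mem_farSet_numTwoWalksInto_lt (hreg : G.IsRegularOfDegree d)
    (hD : (D : Set (Fin (d + 1))).PairwiseDisjoint (G.closedNbhd ∘ f)) {t : ℕ}
    (ht : #D * d * (d - 1) ^ 2 < #(G.farSet D f) * t) :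
    ∃ v ∈ G.farSet D f, G.numTwoWalksInto (G.petals D f) v < t :=
  exists_lt_of_sum_lt <| (sum_numTwoWalksInto_farSet_le hreg hD).trans_lt (by simpa using ht)

variable (G) in
/-- The centres `f j`, `j ∈ D`, placed so far are the future dominant vertices of colour `j`. -/
structure IsPartialBColoring (D : Finset (Fin (d + 1))) (f : Fin (d + 1) → V)
    (col : V → Option (Fin (d + 1))) : Prop where
  pairwiseDisjoint : (D : Set (Fin (d + 1))).PairwiseDisjoint (G.closedNbhd ∘ f)
  isSome_iff : ∀ v, (col v).isSome ↔ ∃ j ∈ D, v ∈ G.closedNbhd (f j)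
  center : ∀ j ∈ D, col (f j) = some j
  proper : G.IsProperPartialColoring col
  rainbow : ∀ j ∈ D, ∀ c ≠ j, ∃ u, G.Adj (f j) u ∧ col u = some c
  injOn : ∀ j ∈ D, Set.InjOn col (G.neighborSet (f j))

namespace IsPartialBColoring

variable {col : V → Option (Fin (d + 1))} (hB : G.IsPartialBColoring D f col)
include hB

theorem eq_none_of_mem_farSet {v u : V} (hv : v ∈ G.farSet D f) (hu : u ∈ G.closedNbhd v) :
    col u = none := by
  rw [← Option.not_isSome_iff_eq_none, hB.isSome_iff]
  rintro ⟨j, hj, huj⟩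
  exact Finset.disjoint_left.1 (mem_farSet.1 hv j hj) hu huj

theorem mem_petals_of_mem_farSet {v u w : V} (hv : v ∈ G.farSet D f) (hvu : G.Adj v u)
    (huw : G.Adj u w) (hw : (col w).isSome) : w ∈ G.petals D f := by
  obtain ⟨j, hj, hwj⟩ := (hB.isSome_iff w).1 hw
  rcases mem_closedNbhd.1 hwj with rfl | hjw
  · exact absurd (mem_closedNbhd.2 (Or.inr huw.symm))
      (Finset.disjoint_left.1 (mem_farSet.1 hv j hj) (mem_closedNbhd.2 (Or.inr hvu)))
  · exact mem_biUnion.2 ⟨j, hj, by simpa using hjw⟩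

theorem sum_card_neighborColors_le {v : V} (hv : v ∈ G.farSet D f) :
    ∑ u ∈ G.neighborFinset v, #(G.neighborColors col u) ≤ G.numTwoWalksInto (G.petals D f) v :=
  sum_le_sum fun u hu => card_neighborColors_le fun w huw hw =>
    mem_inter.2 ⟨by simpa using huw, hB.mem_petals_of_mem_farSet hv (by simpa using hu) huw hw⟩

theorem card_neighborColors_lt (hreg : G.IsRegularOfDegree d) {v u : V} (hv : v ∈ G.farSet D f)
    (hvu : G.Adj v u) : #(G.neighborColors col u) < d := by
  refine (card_neighborColors_le (s := (G.neighborFinset u).erase v) fun w huw hw => ?_).trans_lt ?_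
  · refine mem_erase.2 ⟨?_, by simpa using huw⟩
    rintro rfl
    simp [hB.eq_none_of_mem_farSet hv (mem_closedNbhd.2 (Or.inl rfl))] at hw
  · rw [← hreg u, ← card_neighborFinset_eq_degree]
    exact card_erase_lt_of_mem (by simpa [adj_comm] using hvu)

/-- A petal contains at most one vertex of each colour, and the petal of the centre of colour
`c` none. -/
theorem card_filter_petals_le (c : Fin (d + 1)) :
    #((G.petals D f).filter fun x => col x = some c) ≤ #(D.erase c) := calc
  _ ≤ #((D.erase c).biUnion fun j => (G.neighborFinset (f j)).filter fun x => col x = some c) := by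
      refine card_le_card fun x hx => ?_
      obtain ⟨hxP, hxc⟩ := mem_filter.1 hx
      obtain ⟨j, hj, hxj⟩ := mem_biUnion.1 hxP
      refine mem_biUnion.2 ⟨j, mem_erase.2 ⟨?_, hj⟩, mem_filter.2 ⟨hxj, hxc⟩⟩
      rintro rfl
      exact hB.proper _ x (by simpa using hxj) (by simp [hB.center j hj])
        (by rw [hB.center j hj, hxc])
  _ ≤ ∑ j ∈ D.erase c, #((G.neighborFinset (f j)).filter fun x => col x = some c) :=
      card_biUnion_le
  _ ≤ ∑ _j ∈ D.erase c, 1 := sum_le_sum fun j hj => card_le_one.2 fun x hx y hy =>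
      hB.injOn j (mem_of_mem_erase hj) (by simpa using (mem_filter.1 hx).1)
        (by simpa using (mem_filter.1 hy).1) (by rw [(mem_filter.1 hx).2, (mem_filter.1 hy).2])
  _ = #(D.erase c) := by simp

/-- Without 4-cycles, the vertices of colour `c` adjacent to the different neighbours of `v` are
distinct and lie in the petals, which hold too few of them. -/
theorem exists_notMem_neighborColors (hreg : G.IsRegularOfDegree d)
    (hC4 : ∀ v w, v ≠ w → (G.commonNeighbors v w).Subsingleton) {i c : Fin (d + 1)}
    (hi : i ∉ D) (hc : c ≠ i) {v : V} (hv : v ∈ G.farSet D f) :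
    ∃ u ∈ G.neighborFinset v, c ∉ G.neighborColors col u := by
  by_contra! h
  choose! w hw using fun u hu => mem_neighborColors.1 (h u hu)
  have hwv : ∀ u ∈ G.neighborFinset v, w u ≠ v := fun u hu hwu => by
    have := (hw u hu).2
    rw [hwu, hB.eq_none_of_mem_farSet hv (mem_closedNbhd.2 (Or.inl rfl))] at this
    cases this
  have hinj : Set.InjOn w (G.neighborFinset v) := fun u hu u' hu' huu' =>
    hC4 v (w u) (hwv u hu).symm (G.mem_commonNeighbors.2 ⟨by simpa using hu, (hw u hu).1.symm⟩)
      (G.mem_commonNeighbors.2 ⟨by simpa using hu', huu' ▸ (hw u' hu').1.symm⟩)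
  have hmaps : Set.MapsTo w (G.neighborFinset v) ((G.petals D f).filter fun x => col x = some c) :=
    fun u hu => mem_filter.2 ⟨hB.mem_petals_of_mem_farSet hv (by simpa using hu) (hw u hu).1
      (by simp [(hw u hu).2]), (hw u hu).2⟩
  have hD : D.erase c ⊆ (univ.erase i).erase c :=
    erase_subset_erase _ fun j hj => mem_erase.2 ⟨fun hji => hi (hji ▸ hj), mem_univ j⟩
  have := (card_le_card_of_injOn w hmaps hinj).trans
    ((hB.card_filter_petals_le c).trans (card_le_card hD))
  rw [card_neighborFinset_eq_degree, hreg v] at this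
  have := card_erase_lt_of_mem (mem_erase.2 ⟨hc, mem_univ c⟩)
  simp at this
  omega

theorem starExtend_of_isSome {v u : V} {a : Fin (d + 1)} {g : V → Fin (d + 1)}
    (hv : v ∈ G.farSet D f) (hu : (col u).isSome) : G.starExtend col v a g u = col u :=
  starExtend_of_notMem fun huv => by simp [hB.eq_none_of_mem_farSet hv huv] at hu

theorem isSome_starExtend_iff {i : Fin (d + 1)} {v : V} {g : V → Fin (d + 1)} (hi : i ∉ D)
    (u : V) : (G.starExtend col v i g u).isSome ↔
      ∃ j ∈ insert i D, u ∈ G.closedNbhd (Function.update f i v j) := by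
  rw [exists_mem_insert, Function.update_self]
  by_cases hu : u ∈ G.closedNbhd v
  · rcases mem_closedNbhd.1 hu with rfl | hvu
    · simp
    · simp [starExtend_of_adj hvu, hu]
  · rw [starExtend_of_notMem hu, hB.isSome_iff]
    simp only [hu, false_or]
    exact exists_congr fun j => and_congr_right fun hj => by
      rw [Function.update_of_ne (ne_of_mem_of_not_mem hj hi)]

theorem starExtend_insert {i : Fin (d + 1)} {v : V} {g : V → Fin (d + 1)} (hi : i ∉ D)
    (hv : v ∈ G.farSet D f) (hinj : Set.InjOn g (G.neighborSet v))
    (hg : ∀ u, G.Adj v u → g u ≠ i ∧ g u ∉ G.neighborColors col u)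
    (hsurj : ∀ c ≠ i, ∃ u, G.Adj v u ∧ g u = c) :
    G.IsPartialBColoring (insert i D) (Function.update f i v) (G.starExtend col v i g) := by
  have hf : ∀ j ∈ D, Function.update f i v j = f j := fun j hj =>
    Function.update_of_ne (ne_of_mem_of_not_mem hj hi) _ _
  have hpetal : ∀ j ∈ D, ∀ u ∈ G.closedNbhd (f j), G.starExtend col v i g u = col u :=
    fun j hj u hu => hB.starExtend_of_isSome hv ((hB.isSome_iff u).2 ⟨j, hj, hu⟩)
  refine ⟨?_, hB.isSome_starExtend_iff hi, fun j hj => ?_, ?_, fun j hj c hc => ?_,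
    fun j hj => ?_⟩
  · rw [coe_insert]
    refine Set.PairwiseDisjoint.insert (fun j hj k hk hjk => ?_) fun j hj _ => ?_
    · simpa only [Function.onFun, Function.comp, hf j hj, hf k hk] using
        hB.pairwiseDisjoint hj hk hjk
    · simpa [hf j hj] using mem_farSet.1 hv j hj
  · rcases mem_insert.1 hj with rfl | hj
    · simp
    · rw [hf j hj, hpetal j hj _ (mem_closedNbhd.2 (Or.inl rfl)), hB.center j hj]
  · exact hB.proper.starExtend (fun u hu => (hg u hu).1) hinj fun u hu => (hg u hu).2
  · rcases mem_insert.1 hj with rfl | hj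
    · obtain ⟨u, hvu, rfl⟩ := hsurj c hc
      exact ⟨u, by simpa using hvu, starExtend_of_adj hvu⟩
    · obtain ⟨u, hju, hcu⟩ := hB.rainbow j hj c hc
      exact ⟨u, by rwa [hf j hj], by rw [hB.starExtend_of_isSome hv (by simp [hcu]), hcu]⟩
  · rcases mem_insert.1 hj with rfl | hj
    · rw [Function.update_self]
      intro u hu u' hu' h
      rw [starExtend_of_adj hu, starExtend_of_adj hu'] at h
      exact hinj hu hu' (Option.some_injective _ h)
    · rw [hf j hj]
      intro u hu u' hu' h
      rw [hpetal j hj u (mem_closedNbhd.2 (Or.inr hu)),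
        hpetal j hj u' (mem_closedNbhd.2 (Or.inr hu'))] at h
      exact hB.injOn j hj hu hu' h

/-- The new petal is coloured by a system of distinct representatives (Hall's theorem). -/
theorem exists_insert (hreg : G.IsRegularOfDegree d) {i : Fin (d + 1)} {v : V} (hi : i ∉ D)
    (hv : v ∈ G.farSet D f) (hsum : ∑ u ∈ G.neighborFinset v, #(G.neighborColors col u) ≤ d)
    (hcommon : ∀ c ≠ i, ∃ u ∈ G.neighborFinset v, c ∉ G.neighborColors col u) :
    ∃ col', G.IsPartialBColoring (insert i D) (Function.update f i v) col' := by
  have hC : #(univ.erase i) = d := by simp [card_erase_of_mem]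
  have hN : #(G.neighborFinset v) = d := by rw [card_neighborFinset_eq_degree, hreg v]
  obtain ⟨g, hinj, hg⟩ := exists_injOn_mem_sdiff (s := G.neighborFinset v) (C := univ.erase i)
    (F := G.neighborColors col) (by rw [hN, hC])
    (by rw [hC]; exact (sum_le_sum fun u _ => card_le_card inter_subset_left).trans hsum)
    (fun u hu => by
      rw [hC]
      exact (card_le_card inter_subset_left).trans_lt
        (hB.card_neighborColors_lt hreg hv (by simpa using hu)))
    fun c hc => hcommon c (mem_erase.1 hc).1
  have hsurj := surjOn_of_injOn_of_card_le g (fun u hu => (mem_sdiff.1 (hg u hu)).1) hinj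
    (by rw [hN, hC])
  refine ⟨_, hB.starExtend_insert hi hv (by simpa using hinj) (fun u hu => ?_) fun c hc => ?_⟩
  · simpa using hg u (by simpa using hu)
  · obtain ⟨u, hu, rfl⟩ := hsurj (mem_erase.2 ⟨hc, mem_univ c⟩)
    exact ⟨u, by simpa using hu, rfl⟩

theorem exists_insert_of_numTwoWalksInto_lt (hreg : G.IsRegularOfDegree d) {i : Fin (d + 1)}
    {v : V} (hi : i ∉ D) (hv : v ∈ G.farSet D f)
    (hwalks : G.numTwoWalksInto (G.petals D f) v < d) :
    ∃ col', G.IsPartialBColoring (insert i D) (Function.update f i v) col' := by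
  have hsum := (hB.sum_card_neighborColors_le hv).trans_lt hwalks
  refine hB.exists_insert hreg hi hv hsum.le fun c _ => ?_
  by_contra! h
  refine hsum.not_ge ?_
  calc d = ∑ _u ∈ G.neighborFinset v, 1 := by simp [card_neighborFinset_eq_degree, hreg v]
    _ ≤ ∑ u ∈ G.neighborFinset v, #(G.neighborColors col u) :=
      sum_le_sum fun u hu => card_pos.2 ⟨c, h u hu⟩

theorem exists_insert_of_subsingleton (hreg : G.IsRegularOfDegree d)
    (hC4 : ∀ v w, v ≠ w → (G.commonNeighbors v w).Subsingleton) {i : Fin (d + 1)} {v : V}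
    (hi : i ∉ D) (hv : v ∈ G.farSet D f) (hwalks : G.numTwoWalksInto (G.petals D f) v ≤ d) :
    ∃ col', G.IsPartialBColoring (insert i D) (Function.update f i v) col' :=
  hB.exists_insert hreg hi hv ((hB.sum_card_neighborColors_le hv).trans hwalks) fun _c hc =>
    hB.exists_notMem_neighborColors hreg hC4 hi hc hv

end IsPartialBColoring

theorem isPartialBColoring_empty : G.IsPartialBColoring ∅ f fun _ => none where
  pairwiseDisjoint := by simp
  isSome_iff := by simp
  center := by simp
  proper := by simp [IsProperPartialColoring]
  rainbow := by simp
  injOn := by simp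

theorem le_card_farSet (hreg : G.IsRegularOfDegree d)
    (hcard : d * (d ^ 2 + 1) + d * (d - 1) ^ 2 ≤ Fintype.card V) (hD : #D ≤ d) :
    d * (d - 1) ^ 2 ≤ #(G.farSet D f) := by
  have h1 : ∑ j ∈ D, #(G.ball2 (f j)) ≤ #D * (d ^ 2 + 1) := by
    simpa using sum_le_card_nsmul _ _ _ fun j _ => card_ball2_le hreg (f j)
  have h2 := Nat.mul_le_mul_right (d ^ 2 + 1) hD
  have := card_le_card_farSet_add (G := G) (D := D) (f := f)
  omega

theorem lt_card_farSet (hreg : G.IsRegularOfDegree d)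
    (hcard : d * (d ^ 2 + 1) + d * (d - 1) ^ 2 ≤ Fintype.card V) (hD : #D ≤ d) {j : Fin (d + 1)}
    (hj : j ∈ D) (hsmall : #(G.ball2 (f j)) ≤ d ^ 2) :
    d * (d - 1) ^ 2 < #(G.farSet D f) := by
  have h1 : ∑ j ∈ D, #(G.ball2 (f j)) < #D * (d ^ 2 + 1) := by
    simpa using sum_lt_sum (fun j _ => card_ball2_le hreg (f j)) ⟨j, hj, by omega⟩
  have h2 := Nat.mul_le_mul_right (d ^ 2 + 1) hD
  have := card_le_card_farSet_add (G := G) (D := D) (f := f)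
  omega

theorem exists_isPartialBColoring_univ_of_subsingleton (hreg : G.IsRegularOfDegree d)
    (hd : 2 ≤ d) (hcard : d * (d ^ 2 + 1) + d * (d - 1) ^ 2 ≤ Fintype.card V)
    (hC4 : ∀ v w, v ≠ w → (G.commonNeighbors v w).Subsingleton) :
    ∃ f col, G.IsPartialBColoring (d := d) univ f col := by
  have : Nonempty V := Fintype.card_pos_iff.1 <|
    (Nat.mul_pos (by omega) (by positivity)).trans_le ((Nat.le_add_right _ _).trans hcard)
  suffices ∀ D, ∃ f col, G.IsPartialBColoring (d := d) D f col from this univ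
  intro D
  induction D using Finset.induction_on with
  | empty => exact ⟨fun _ => Classical.arbitrary V, _, isPartialBColoring_empty⟩
  | insert i D hi ih =>
    obtain ⟨f, col, hB⟩ := ih
    have hD : #D ≤ d := by simpa using card_lt_univ_of_notMem hi
    have hX := le_card_farSet (f := f) hreg hcard hD
    have hpos : 0 < d * (d - 1) ^ 2 := Nat.mul_pos (by omega) (pow_pos (by omega) 2)
    obtain ⟨v, hv, hwalks⟩ := exists_mem_farSet_numTwoWalksInto_lt hreg hB.pairwiseDisjoint
      (t := d + 1) <| calc
        #D * d * (d - 1) ^ 2 ≤ d * (d * (d - 1) ^ 2) := by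
          rw [mul_assoc]; exact Nat.mul_le_mul_right _ hD
        _ < (d + 1) * (d * (d - 1) ^ 2) := Nat.mul_lt_mul_of_pos_right (lt_add_one d) hpos
        _ ≤ #(G.farSet D f) * (d + 1) := by rw [mul_comm]; exact Nat.mul_le_mul_right _ hX
    obtain ⟨col', hB'⟩ := hB.exists_insert_of_subsingleton hreg hC4 hi hv (Nat.lt_succ_iff.1 hwalks)
    exact ⟨_, col', hB'⟩

/-- Here the first centre is put on a 4-cycle; its smaller second neighbourhood leaves room to
demand fewer walks into the petals, which makes every colour available somewhere. -/
theorem exists_isPartialBColoring_univ_of_nontrivial (hreg : G.IsRegularOfDegree d)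
    (hd : 0 < d) (hcard : d * (d ^ 2 + 1) + d * (d - 1) ^ 2 ≤ Fintype.card V) {v w : V}
    (hvw : v ≠ w) (hvw' : (G.commonNeighbors v w).Nontrivial) :
    ∃ f col, G.IsPartialBColoring (d := d) univ f col := by
  have hball := card_ball2_le_of_nontrivial hreg hvw hvw'
  suffices ∀ D, ∃ f col, G.IsPartialBColoring (d := d) D f col ∧
      (D.Nonempty → ∃ j ∈ D, #(G.ball2 (f j)) ≤ d ^ 2) from
    let ⟨f, col, hB, _⟩ := this univ; ⟨f, col, hB⟩
  intro D
  induction D using Finset.induction_on with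
  | empty => exact ⟨fun _ => v, _, isPartialBColoring_empty, by simp⟩
  | insert i D hi ih =>
    obtain ⟨f, col, hB, hsmall⟩ := ih
    obtain rfl | hD := D.eq_empty_or_nonempty
    · obtain ⟨col', hB'⟩ := hB.exists_insert_of_numTwoWalksInto_lt hreg hi (v := v)
        (by simp [mem_farSet]) (by simp [numTwoWalksInto, petals]; omega)
      exact ⟨_, col', hB', fun _ => ⟨i, mem_insert_self i ∅, by simpa using hball⟩⟩
    · obtain ⟨j, hj, hj'⟩ := hsmall hD
      have hcardD : #D ≤ d := by simpa using card_lt_univ_of_notMem hi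
      have hX := lt_card_farSet hreg hcard hcardD hj hj'
      obtain ⟨x, hx, hwalks⟩ := exists_mem_farSet_numTwoWalksInto_lt hreg hB.pairwiseDisjoint
        (t := d) <| calc
          #D * d * (d - 1) ^ 2 ≤ d * (d * (d - 1) ^ 2) := by
            rw [mul_assoc]; exact Nat.mul_le_mul_right _ hcardD
          _ < #(G.farSet D f) * d := by
            rw [mul_comm]; exact Nat.mul_lt_mul_of_pos_right hX (by omega)
      obtain ⟨col', hB'⟩ := hB.exists_insert_of_numTwoWalksInto_lt hreg hi hx hwalks
      exact ⟨_, col', hB', fun _ => ⟨j, mem_insert_of_mem hj,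
        by rwa [Function.update_of_ne (ne_of_mem_of_not_mem hj hi)]⟩⟩

theorem IsPartialBColoring.isBColoring {col : V → Option (Fin (d + 1))}
    (hB : G.IsPartialBColoring univ f col) {c : V → Fin (d + 1)}
    (hc : ∀ u v, G.Adj u v → c u ≠ c v) (hext : ∀ v a, col v = some a → c v = a) :
    IsBColoring G (d + 1) c := by
  refine ⟨hc, fun i => ⟨f i, hext _ _ (hB.center i (mem_univ i)), fun j hj => ?_⟩⟩
  obtain ⟨u, hu, hcu⟩ := hB.rainbow i (mem_univ i) j hj
  exact ⟨u, hu, hext u j hcu⟩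

end Centers

theorem exists_isBColoring (hreg : G.IsRegularOfDegree d) (hd : 2 ≤ d)
    (hcard : d * (d ^ 2 + 1) + d * (d - 1) ^ 2 ≤ Fintype.card V) :
    ∃ c : V → Fin (d + 1), IsBColoring G (d + 1) c := by
  obtain ⟨f, col, hB⟩ : ∃ f col, G.IsPartialBColoring (d := d) univ f col := by
    by_cases hC4 : ∀ v w, v ≠ w → (G.commonNeighbors v w).Subsingleton
    · exact exists_isPartialBColoring_univ_of_subsingleton hreg hd hcard hC4
    · push Not at hC4
      obtain ⟨v, w, hvw, h⟩ := hC4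
      exact exists_isPartialBColoring_univ_of_nontrivial hreg (by omega) hcard hvw h
  obtain ⟨c, hc, hext⟩ := G.exists_coloring_extending (fun v => by rw [hreg v]; omega) col hB.proper
  exact ⟨c, hB.isBColoring hc hext⟩

end SimpleGraph

theorem IsBColoring.le_of_degree_le {V : Type*} [Fintype V] {G : SimpleGraph V} [DecidableRel G.Adj]
    {d k : ℕ} {c : V → Fin k} (hc : IsBColoring G k c) (hdeg : ∀ v, G.degree v ≤ d) :
    k ≤ d + 1 := by
  classical
  rcases Nat.eq_zero_or_pos k with rfl | hk
  · omega
  obtain ⟨v, hv, hdom⟩ := hc.2 ⟨0, hk⟩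
  have hsub : univ.erase (c v) ⊆ (G.neighborFinset v).image c := fun j hj => by
    obtain ⟨w, hvw, rfl⟩ := hdom j (hv ▸ (mem_erase.1 hj).1)
    exact mem_image_of_mem c (by simpa using hvw)
  have := (card_le_card hsub).trans card_image_le
  rw [card_erase_of_mem (mem_univ _), card_univ, Fintype.card_fin,
    G.card_neighborFinset_eq_degree] at this
  have := hdeg v
  omega

/-- Theorem 2.2: a `d`-regular graph (`d ≥ 4`) with at least `2d³ + 2d − 2d²` vertices
has b-chromatic number `d + 1`. -/
theorem bChromaticNumber_eq_of_card_ge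
    {V : Type*} [Fintype V] (G : SimpleGraph V) [DecidableRel G.Adj]
    (d : ℕ) (hd : 4 ≤ d) (hreg : G.IsRegularOfDegree d)
    (hcard : 2 * d ^ 3 + 2 * d - 2 * d ^ 2 ≤ Fintype.card V) :
    bChromaticNumber G = d + 1 := by
  classical
  have hcount : d * (d ^ 2 + 1) + d * (d - 1) ^ 2 = 2 * d ^ 3 + 2 * d - 2 * d ^ 2 := by
    refine Nat.eq_sub_of_add_eq ?_
    obtain ⟨e, rfl⟩ : ∃ e, d = e + 1 := ⟨d - 1, by omega⟩
    simp only [Nat.add_sub_cancel]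
    ring
  refine IsGreatest.csSup_eq ⟨G.exists_isBColoring hreg (by omega) (hcount ▸ hcard), ?_⟩
  rintro k ⟨c, hc⟩
  exact hc.le_of_degree_le fun v => (hreg v).le
end

section
/- Let t be a fixed positive integer, and let H be a finite bipartite simple graph whose two parts L and V each have cardinality t. If for every vertex v ∈ V and every vertex u ∈ L the degrees satisfy d_H(v) + d_H(u) ≥ t, then H has a perfect matching. -/
/-!
By Hall's theorem it suffices to show `#A ≤ #N(A)` for every set `A` of vertices, and since `N(A)`
splits along the bipartition it suffices to do so for `A` inside one part, say `L`. If `N(A) = V`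
this is `#A ≤ #L = #V`. Otherwise some `v ∈ V` has no neighbour in `A`, so `d(v) ≤ t - #A`, while
any `u ∈ A` has `d(u) ≤ #N(A)`; then `t ≤ d(u) + d(v) ≤ #N(A) + t - #A`.
-/

namespace SimpleGraph

variable {W : Type*} {G : SimpleGraph W} {L V : Set W}

theorem ncard_neighborSet_eq_degree (v : W) [Fintype (G.neighborSet v)] :
    (G.neighborSet v).ncard = G.degree v :=
  Set.ncard_eq_toFinset_card' _

theorem ncard_le_ncard_iUnion_neighborSet_of_le_degree_add_degree [Fintype W] [DecidableRel G.Adj]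
    (hG : G.IsBipartiteWith L V) (hcard : L.ncard ≤ V.ncard)
    (hdeg : ∀ v ∈ V, ∀ u ∈ L, L.ncard ≤ G.degree v + G.degree u) :
    ∀ A ⊆ L, A.ncard ≤ (⋃ x ∈ A, G.neighborSet x).ncard := by
  intro A hA
  set N := ⋃ x ∈ A, G.neighborSet x
  have hNV : N ⊆ V := Set.iUnion₂_subset fun u hu ↦ isBipartiteWith_neighborSet_subset hG (hA hu)
  have hAL : A.ncard ≤ L.ncard := Set.ncard_le_ncard hA
  obtain rfl | ⟨u, hu⟩ := A.eq_empty_or_nonempty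
  · simp
  by_cases hNeq : N = V
  · rw [hNeq]
    exact hAL.trans hcard
  obtain ⟨v, hvV, hvN⟩ := Set.exists_of_ssubset (hNV.ssubset_of_ne hNeq)
  have hv : G.neighborSet v ⊆ L \ A := fun x hx ↦
    ⟨isBipartiteWith_neighborSet_subset hG.symm hvV hx,
      fun hxA ↦ hvN (Set.mem_biUnion hxA (G.adj_symm hx))⟩
  have hdeg_v : G.degree v ≤ L.ncard - A.ncard := by
    rw [← ncard_neighborSet_eq_degree, ← Set.ncard_sdiff hA]
    exact Set.ncard_le_ncard hv
  have hdeg_u : G.degree u ≤ N.ncard := by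
    rw [← ncard_neighborSet_eq_degree]
    exact Set.ncard_le_ncard (Set.subset_biUnion_of_mem hu)
  have := hdeg v hvV u (hA hu)
  omega

theorem ncard_le_ncard_iUnion_neighborSet_of_isBipartiteWith [Finite W]
    (hG : G.IsBipartiteWith L V) (hLV : L ∪ V = Set.univ)
    (hallL : ∀ A ⊆ L, A.ncard ≤ (⋃ x ∈ A, G.neighborSet x).ncard)
    (hallV : ∀ B ⊆ V, B.ncard ≤ (⋃ x ∈ B, G.neighborSet x).ncard) (s : Set W) :
    s.ncard ≤ (⋃ x ∈ s, G.neighborSet x).ncard := by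
  have hs : s ⊆ (s ∩ L) ∪ (s ∩ V) := by
    rw [← Set.inter_union_distrib_left, hLV, Set.inter_univ]
  have hdisj : Disjoint (⋃ x ∈ s ∩ L, G.neighborSet x) (⋃ x ∈ s ∩ V, G.neighborSet x) :=
    hG.disjoint.symm.mono
      (Set.iUnion₂_subset fun _ hx ↦ isBipartiteWith_neighborSet_subset hG hx.2)
      (Set.iUnion₂_subset fun _ hx ↦ isBipartiteWith_neighborSet_subset hG.symm hx.2)
  calc s.ncard ≤ (s ∩ L).ncard + (s ∩ V).ncard :=
        (Set.ncard_le_ncard hs).trans (Set.ncard_union_le _ _)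
    _ ≤ (⋃ x ∈ s ∩ L, G.neighborSet x).ncard + (⋃ x ∈ s ∩ V, G.neighborSet x).ncard :=
        add_le_add (hallL _ Set.inter_subset_right) (hallV _ Set.inter_subset_right)
    _ = ((⋃ x ∈ s ∩ L, G.neighborSet x) ∪ ⋃ x ∈ s ∩ V, G.neighborSet x).ncard :=
        (Set.ncard_union_eq hdisj).symm
    _ ≤ (⋃ x ∈ s, G.neighborSet x).ncard :=
        Set.ncard_le_ncard (Set.union_subset
          (Set.biUnion_subset_biUnion_left Set.inter_subset_left)
          (Set.biUnion_subset_biUnion_left Set.inter_subset_left))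

end SimpleGraph

open SimpleGraph in
theorem exists_perfect_matching_of_degree_sum_general
    {W : Type*} [Fintype W] [DecidableEq W] (H : SimpleGraph W) [DecidableRel H.Adj]
    (L V : Finset W) (hdisj : Disjoint L V) (hunion : L ∪ V = Finset.univ)
    (hbip : ∀ u v : W, H.Adj u v → (u ∈ L ∧ v ∈ V) ∨ (u ∈ V ∧ v ∈ L))
    (t : ℕ) (hL : L.card = t) (hV : V.card = t)
    (hdeg : ∀ v ∈ V, ∀ u ∈ L, t ≤ H.degree v + H.degree u) :
    ∃ M : H.Subgraph, M.IsPerfectMatching := by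
  have hG : H.IsBipartiteWith L V := ⟨Finset.disjoint_coe.mpr hdisj, hbip⟩
  have hLV : (L ∪ V : Set W) = Set.univ := by
    rw [← Finset.coe_union, hunion, Finset.coe_univ]
  have hL' : (L : Set W).ncard = t := by rw [Set.ncard_coe_finset, hL]
  have hV' : (V : Set W).ncard = t := by rw [Set.ncard_coe_finset, hV]
  refine exists_isPerfectMatching_of_forall_ncard_le hG
    (ncard_le_ncard_iUnion_neighborSet_of_isBipartiteWith hG hLV ?_ ?_)
  · exact ncard_le_ncard_iUnion_neighborSet_of_le_degree_add_degree hG (by rw [hL', hV'])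
      (by rw [hL']; exact hdeg)
  · refine ncard_le_ncard_iUnion_neighborSet_of_le_degree_add_degree hG.symm (by rw [hL', hV'])
      (fun u hu v hv ↦ ?_)
    rw [hV', add_comm]
    exact hdeg v hv u hu

/-- Lemma 3.1: if `H` is a bipartite graph with parts `L` and `V`, each of cardinality
`t > 0`, such that `d_H(v) + d_H(u) ≥ t` for every `v ∈ V` and `u ∈ L`, then `H` has a
perfect matching. -/
theorem exists_perfect_matching_of_degree_sum
    {W : Type*} [Fintype W] [DecidableEq W] (H : SimpleGraph W) [DecidableRel H.Adj]
    (L V : Finset W) (hdisj : Disjoint L V) (hunion : L ∪ V = Finset.univ)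
    (hbip : ∀ u v : W, H.Adj u v → (u ∈ L ∧ v ∈ V) ∨ (u ∈ V ∧ v ∈ L))
    (t : ℕ) (ht : 0 < t) (hL : L.card = t) (hV : V.card = t)
    (hdeg : ∀ v ∈ V, ∀ u ∈ L, t ≤ H.degree v + H.degree u) :
    ∃ M : H.Subgraph, M.IsPerfectMatching :=
  exists_perfect_matching_of_degree_sum_general H L V hdisj hunion hbip t hL hV hdeg
end

section
/- Let G be a finite simple graph, let d ≥ 1, and let K and F be two disjoint sets of vertices of G. Suppose cK : K → {1, …, d+1} is a proper coloring of the subgraph of G induced on K, and c : F → {1, …, d+1} is a proper coloring of the subgraph of G induced on F. Define the coloring digraph Δ_c on vertex set {1, 2, …, d+1} by putting an arc (i, j) whenever there exists a vertex v ∈ F with c(v) = i such that no neighbor of v in K receives color j under cK; a loop of Δ_c is an arc of the form (i, i), and ℓ(Δ_c) denotes the number of loops of Δ_c. If (i, i) is not an arc of Δ_c and there exists a directed circuit in Δ_c passing through the vertex i, then there exists a proper coloring c' : F → {1, …, d+1} of the subgraph induced on F such that ℓ(Δ_{c'}) > ℓ(Δ_c), where Δ_{c'} is the coloring digraph defined as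 Δ_c with c replaced by c' (and cK unchanged). -/
/-- `c` is a proper coloring of the subgraph of `G` induced on the vertex set `S`. -/
def ProperOn {V : Type*} (G : SimpleGraph V) (S : Set V) {n : ℕ} (c : S → Fin n) : Prop :=
  ∀ u v : S, G.Adj (u : V) (v : V) → c u ≠ c v

/-- Arc `(i, j)` of the coloring digraph `Δ_c`: some vertex of `F` colored `i` by `c`
has no neighbor in `K` colored `j` by `cK`. -/
def ColoringDigraphArc {V : Type*} (G : SimpleGraph V) (K F : Set V) {n : ℕ}
    (cK : K → Fin n) (c : F → Fin n) (i j : Fin n) : Prop :=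
  ∃ v : F, c v = i ∧ ∀ w : K, G.Adj (v : V) (w : V) → cK w ≠ j

/-- `ℓ(Δ_c)`: the number of loops of the coloring digraph `Δ_c`. -/
noncomputable def numLoops {V : Type*} (G : SimpleGraph V) (K F : Set V) {n : ℕ}
    (cK : K → Fin n) (c : F → Fin n) : ℕ :=
  Nat.card {i : Fin n // ColoringDigraphArc G K F cK c i i}

/-- Lemma 2.1: if `(i, i)` is not an arc of `Δ_c` but some directed circuit of `Δ_c`
passes through `i`, then `F` can be recolored by a proper coloring `c'` with
`ℓ(Δ_{c'}) > ℓ(Δ_c)`. -/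
theorem exists_recoloring_more_loops
    {V : Type*} [Fintype V] (G : SimpleGraph V) (d : ℕ) (hd : 1 ≤ d)
    (K F : Set V) (hdisj : Disjoint K F)
    (cK : K → Fin (d + 1)) (hcK : ProperOn G K cK)
    (c : F → Fin (d + 1)) (hc : ProperOn G F c)
    (i : Fin (d + 1)) (hno : ¬ ColoringDigraphArc G K F cK c i i)
    (hcirc : ∃ m : ℕ, 0 < m ∧ ∃ f : ZMod m → Fin (d + 1), Function.Injective f ∧
      (∃ s : ZMod m, f s = i) ∧
      ∀ s : ZMod m, ColoringDigraphArc G K F cK c (f s) (f (s + 1))) :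
    ∃ c' : F → Fin (d + 1), ProperOn G F c' ∧
      numLoops G K F cK c < numLoops G K F cK c' := by
  classical
  obtain ⟨m, hm, f, hf, ⟨s₀, hs₀⟩, harc⟩ := hcirc
  haveI : NeZero m := ⟨hm.ne'⟩
  set g : Fin (d + 1) → Fin (d + 1) :=
    fun j => if h : ∃ s, f s = j then f (h.choose + 1) else j with hg
  have hgim : ∀ t : ZMod m, g (f t) = f (t + 1) := by
    intro t
    have h : ∃ s, f s = f t := ⟨t, rfl⟩
    simp only [hg, dif_pos h]
    have h2 : h.choose = t := hf h.choose_spec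
    rw [h2]
  have hgout : ∀ j, (¬ ∃ s, f s = j) → g j = j := by
    intro j h; simp only [hg, dif_neg h]
  have hginj : Function.Injective g := by
    intro a b hab
    by_cases ha : ∃ s, f s = a
    · obtain ⟨s, hs⟩ := ha
      by_cases hb : ∃ t, f t = b
      · obtain ⟨t, ht⟩ := hb
        subst hs ht
        rw [hgim, hgim] at hab
        have h1 : s + 1 = t + 1 := hf hab
        have h2 : s = t := by
          have := congrArg (fun x => x - 1) h1
          simpa using this
        rw [h2]
      · exfalso
        rw [← hs, hgim, hgout b hb] at hab
        exact hb ⟨s + 1, hab⟩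
    · by_cases hb : ∃ t, f t = b
      · obtain ⟨t, ht⟩ := hb
        exfalso
        rw [← ht, hgim, hgout a ha] at hab
        exact ha ⟨t + 1, hab.symm⟩
      · rwa [hgout a ha, hgout b hb] at hab
  refine ⟨g ∘ c, ?_, ?_⟩
  · intro u v hadj h
    exact hc u v hadj (hginj h)
  · -- loop sets
    have hsub : ∀ j, ColoringDigraphArc G K F cK c j j →
        ColoringDigraphArc G K F cK (g ∘ c) j j := by
      intro j hj
      by_cases h : ∃ t, f t = j
      · obtain ⟨t, ht⟩ := h
        obtain ⟨u, hu, huK⟩ := harc (t - 1)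
        rw [sub_add_cancel, ht] at huK
        refine ⟨u, ?_, huK⟩
        show g (c u) = j
        rw [hu, hgim, sub_add_cancel, ht]
      · obtain ⟨v, hv, hK⟩ := hj
        refine ⟨v, ?_, hK⟩
        show g (c v) = j
        rw [hv, hgout j h]
    have hi' : ColoringDigraphArc G K F cK (g ∘ c) i i := by
      obtain ⟨u, hu, huK⟩ := harc (s₀ - 1)
      rw [sub_add_cancel, hs₀] at huK
      refine ⟨u, ?_, huK⟩
      show g (c u) = i
      rw [hu, hgim, sub_add_cancel, hs₀]
    have hL : numLoops G K F cK c =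
        Set.ncard {j | ColoringDigraphArc G K F cK c j j} := rfl
    have hL' : numLoops G K F cK (g ∘ c) =
        Set.ncard {j | ColoringDigraphArc G K F cK (g ∘ c) j j} := rfl
    rw [hL, hL']
    refine Set.ncard_lt_ncard ?_ (Set.toFinite _)
    constructor
    · intro j hj; exact hsub j hj
    · intro hsup
      exact hno (hsup hi')
end
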